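/- Let G be a finite group generated by a symmetric set S containing the identity, and let G₀ be a subgroup of G of index d. Then G₀ ∩ S^{2d−1} contains a symmetric generating set S₀ for G₀ satisfying |S|/d ≤ |S₀| ≤ d·|S| and (diam_S(G) − d)/(2d) ≤ diam_{S₀}(G₀) ≤ diam_S(G). -/

import Mathlib

open Pointwise

/-- The least `n` such that `S^n` is the whole group: the diameter of the Cayley graph. -/
noncomputable def sdiam {G : Type*} [Group G] (S : Set G) : ℕ :=
  sInf {n : ℕ | S ^ n = (Set.univ : Set G)}

/-!
A ball `S ^ k • x` in a transitive action on a finite set grows strictly until it stops growing,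
and then it is `S`-invariant, hence `G`-invariant, hence everything: so `S ^ (|X| - 1) • x = X`.
For `X = G ⧸ G₀` this yields a transversal `τ` of the left cosets inside `S ^ (d - 1)` with
`τ G₀ = 1`. Writing `g = τ (g G₀) * r g` with `r g ∈ G₀`, the identity
`r (s * g) = r (s * τ (g G₀)) * r g` turns a word of length `n` in `S` into a word of length `n`
in the Schreier generators `r (s * τ q) = τ (s q)⁻¹ * s * τ q ∈ S ^ (2d - 1)`. Conversely
`G = τ (G ⧸ G₀) * G₀`, which bounds `diam_S G` by `d - 1 + (2d - 1) diam_{S₀} G₀`.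
-/

section OrbitGrowth

variable {G X : Type*} [Group G] [MulAction G X]

theorem eq_univ_of_smul_subset [Finite X] [MulAction.IsPretransitive G X] {S : Set G}
    (hgen : Subgroup.closure S = ⊤) {A : Set X} (hA : A.Nonempty) (hSA : S • A ⊆ A) :
    A = Set.univ := by
  have hstab : Subgroup.closure S ≤ MulAction.stabilizer G A := by
    refine (Subgroup.closure_le _).2 fun s hs => ?_
    have hsub : s • A ⊆ A := (Set.smul_set_subset_smul hs).trans hSA
    exact Set.eq_of_subset_of_ncard_le hsub (Set.ncard_smul_set s A).ge (Set.toFinite A)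
  obtain ⟨x, hx⟩ := hA
  refine Set.eq_univ_of_forall fun y => ?_
  obtain ⟨g, rfl⟩ := MulAction.exists_smul_eq G x y
  have hg : g • A = A := hstab (hgen ▸ Subgroup.mem_top g)
  exact hg ▸ Set.smul_mem_smul_set hx

theorem pow_smul_singleton_eq_univ [Finite X] [MulAction.IsPretransitive G X] {S : Set G}
    (h1 : 1 ∈ S) (hgen : Subgroup.closure S = ⊤) (x : X) :
    S ^ (Nat.card X - 1) • ({x} : Set X) = Set.univ := by
  set A : ℕ → Set X := fun k => S ^ k • {x}
  have hx : ∀ k, x ∈ A k := fun k =>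
    Set.mem_smul.2 ⟨1, Set.one_mem_pow h1, x, rfl, one_smul G x⟩
  have hsucc : ∀ k, A (k + 1) = S • A k := fun k => by simp only [A, pow_succ', mul_smul]
  have hmono : ∀ k, A k ⊆ A (k + 1) := fun k =>
    Set.smul_subset_smul_right (Set.pow_subset_pow_right h1 k.le_succ)
  have hgrow : ∀ k, A k = Set.univ ∨ k + 1 ≤ (A k).ncard := by
    intro k
    induction k with
    | zero => simp [A]
    | succ k ih =>
      rcases ih with huniv | hcard
      · exact .inl (Set.eq_univ_of_univ_subset (huniv ▸ hmono k))
      by_cases hstable : A (k + 1) = A k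
      · exact .inl <| hstable ▸
          eq_univ_of_smul_subset hgen ⟨x, hx k⟩ ((hsucc k).symm.trans hstable).le
      · have := Set.ncard_lt_ncard ((hmono k).ssubset_of_ne (Ne.symm hstable)) (Set.toFinite _)
        exact .inr (by omega)
  have hcard : 0 < Nat.card X := Nat.card_pos_iff.2 ⟨⟨x⟩, inferInstance⟩
  show A _ = _
  refine (hgrow _).elim id fun h => ?_
  refine Set.eq_of_subset_of_ncard_le (Set.subset_univ _) ?_ (Set.toFinite _)
  rw [Set.ncard_univ]
  omega

theorem pow_card_sub_one_eq_univ [Finite G] {S : Set G} (h1 : 1 ∈ S)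
    (hgen : Subgroup.closure S = ⊤) : S ^ (Nat.card G - 1) = Set.univ := by
  simpa [Set.smul_singleton] using pow_smul_singleton_eq_univ h1 hgen (1 : G)

theorem Subgroup.exists_transversal_mem_pow (H : Subgroup G) [H.FiniteIndex] {S : Set G}
    (h1 : 1 ∈ S) (hgen : Subgroup.closure S = ⊤) :
    ∃ τ : G ⧸ H → G, (∀ q, τ q ∈ S ^ (H.index - 1)) ∧ (∀ q, (τ q : G ⧸ H) = q) ∧
      τ ((1 : G) : G ⧸ H) = 1 := by
  have hcover (q : G ⧸ H) : ∃ x ∈ S ^ (H.index - 1), (x : G ⧸ H) = q := by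
    have hq : q ∈ S ^ (H.index - 1) • ({((1 : G) : G ⧸ H)} : Set (G ⧸ H)) := by
      rw [H.index_eq_card, pow_smul_singleton_eq_univ h1 hgen]
      trivial
    rw [Set.smul_singleton] at hq
    obtain ⟨x, hx, rfl⟩ := hq
    exact ⟨x, hx, by simp⟩
  classical
  choose τ hτS hτ using hcover
  refine ⟨Function.update τ (1 : G) 1, fun q => ?_, fun q => ?_, Function.update_self ..⟩ <;>
    rcases eq_or_ne q ((1 : G) : G ⧸ H) with rfl | hq <;> simp_all [Set.one_mem_pow h1]

end OrbitGrowth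

theorem Subgroup.closure_eq_top_of_pow_eq_univ {G : Type*} [Group G] {S : Set G} {n : ℕ}
    (h : S ^ n = Set.univ) : Subgroup.closure S = ⊤ :=
  eq_top_iff.2 fun x _ => Subgroup.pow_subset Subgroup.subset_closure (h ▸ Set.mem_univ x)

theorem sdiam_le {G : Type*} [Group G] {S : Set G} {n : ℕ} (h : S ^ n = Set.univ) :
    sdiam S ≤ n :=
  Nat.sInf_le h

theorem pow_sdiam {G : Type*} [Group G] {S : Set G} (h : ∃ n, S ^ n = Set.univ) :
    S ^ sdiam S = Set.univ :=
  Nat.sInf_mem h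

namespace Schreier

variable {G : Type*} [Group G] {H : Subgroup G}
  (τ : G ⧸ H → G) (hτ : ∀ q, (τ q : G ⧸ H) = q)

def remainder (g : G) : H :=
  ⟨(τ g)⁻¹ * g, by rw [← QuotientGroup.eq, hτ]⟩

def generators [Fintype (G ⧸ H)] [DecidableEq H] (S : Finset G) : Finset H :=
  (Finset.univ ×ˢ S).image fun p => remainder τ hτ (p.2 * τ p.1)

variable {τ} {hτ}

theorem mk_mul_rep (hτ : ∀ q, (τ q : G ⧸ H) = q) (a g : G) :
    ((a * τ g : G) : G ⧸ H) = (a * g : G) :=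
  congrArg (a • ·) (hτ g)

theorem rep_mul_remainder (g : G) : τ g * (remainder τ hτ g : G) = g :=
  mul_inv_cancel_left _ _

theorem remainder_mul (a g : G) :
    remainder τ hτ (a * g) = remainder τ hτ (a * τ g) * remainder τ hτ g :=
  Subtype.ext <| by simp only [remainder, Subgroup.coe_mul, mk_mul_rep hτ, mul_assoc,
    mul_inv_cancel_left]

theorem remainder_of_mem (hτ1 : τ ((1 : G) : G ⧸ H) = 1) {h : G} (hh : h ∈ H) :
    remainder τ hτ h = ⟨h, hh⟩ := by
  have : (h : G ⧸ H) = ((1 : G) : G ⧸ H) := QuotientGroup.eq.2 (by simpa using hh)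
  simp [remainder, this, hτ1]

variable [Fintype (G ⧸ H)] [DecidableEq H] {S : Finset G}

theorem mem_generators {x : H} :
    x ∈ generators τ hτ S ↔ ∃ q, ∃ s ∈ S, remainder τ hτ (s * τ q) = x := by
  simp [generators]

theorem one_mem_generators (h1 : (1 : G) ∈ S) : 1 ∈ generators τ hτ S :=
  mem_generators.2 ⟨(1 : G), 1, h1, Subtype.ext <| by simp [remainder, hτ]⟩

theorem inv_mem_generators (hsym : ∀ s ∈ S, s⁻¹ ∈ S) {x : H} (hx : x ∈ generators τ hτ S) :
    x⁻¹ ∈ generators τ hτ S := by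
  obtain ⟨q, s, hs, rfl⟩ := mem_generators.1 hx
  refine mem_generators.2 ⟨(s * τ q : G), s⁻¹, hsym s hs, Subtype.ext ?_⟩
  simp [remainder, mk_mul_rep hτ, hτ, mul_assoc]

theorem coe_mem_pow_of_mem_generators {k : ℕ} (hτS : ∀ q, τ q ∈ (S : Set G) ^ k)
    (hsym : ∀ s ∈ S, s⁻¹ ∈ S) {x : H} (hx : x ∈ generators τ hτ S) :
    (x : G) ∈ (S : Set G) ^ (2 * k + 1) := by
  obtain ⟨q, s, hs, rfl⟩ := mem_generators.1 hx
  have hinv : (S : Set G)⁻¹ ⊆ S := fun y hy => by simpa using hsym _ hy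
  have hτinv (q : G ⧸ H) : (τ q)⁻¹ ∈ (S : Set G) ^ k :=
    Set.pow_subset_pow_left hinv (by rw [inv_pow]; exact Set.inv_mem_inv.2 (hτS q))
  show (τ _)⁻¹ * (s * τ q) ∈ _
  rw [← mul_assoc, show 2 * k + 1 = k + 1 + k by ring, pow_add, pow_add, pow_one]
  exact Set.mul_mem_mul (Set.mul_mem_mul (hτinv _) hs) (hτS q)

theorem remainder_mem_pow (hτ1 : τ ((1 : G) : G ⧸ H) = 1) {n : ℕ} {g : G}
    (hg : g ∈ (S : Set G) ^ n) : remainder τ hτ g ∈ (generators τ hτ S : Set H) ^ n := by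
  induction n generalizing g with
  | zero =>
    obtain rfl : g = 1 := by simpa using hg
    rw [pow_zero, Set.mem_one, remainder_of_mem hτ1 H.one_mem]
    rfl
  | succ n ih =>
    rw [pow_succ'] at hg ⊢
    obtain ⟨s, hs, x, hx, rfl⟩ := hg
    rw [remainder_mul]
    exact Set.mul_mem_mul (mem_generators.2 ⟨_, s, hs, rfl⟩) (ih hx)

theorem generators_pow_eq_univ (hτ1 : τ ((1 : G) : G ⧸ H) = 1) {n : ℕ}
    (h : (S : Set G) ^ n = Set.univ) : (generators τ hτ S : Set H) ^ n = Set.univ := by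
  refine Set.eq_univ_of_forall fun ⟨g, hg⟩ => ?_
  rw [← remainder_of_mem hτ1 hg]
  exact remainder_mem_pow hτ1 (h ▸ Set.mem_univ g)

theorem pow_eq_univ_of_generators_pow_eq_univ {k n : ℕ} (hτS : ∀ q, τ q ∈ (S : Set G) ^ k)
    (hsym : ∀ s ∈ S, s⁻¹ ∈ S) (h : (generators τ hτ S : Set H) ^ n = Set.univ) :
    (S : Set G) ^ (k + (2 * k + 1) * n) = Set.univ := by
  have hH : (H : Set G) ⊆ (S : Set G) ^ ((2 * k + 1) * n) := by
    intro g hg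
    have hmem : g ∈ H.subtype '' ((generators τ hτ S : Set H) ^ n) := ⟨⟨g, hg⟩, h ▸ trivial, rfl⟩
    rw [Set.image_pow] at hmem
    rw [pow_mul]
    exact Set.pow_subset_pow_left (Set.image_subset_iff.2
      fun x hx => coe_mem_pow_of_mem_generators hτS hsym hx) hmem
  refine Set.eq_univ_of_forall fun g => ?_
  rw [pow_add, ← rep_mul_remainder (hτ := hτ) g]
  exact Set.mul_mem_mul (hτS _) (hH (remainder τ hτ g).2)

theorem card_generators_le : (generators τ hτ S).card ≤ H.index * S.card := by
  calc (generators τ hτ S).card ≤ (Finset.univ ×ˢ S).card := Finset.card_image_le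
    _ = H.index * S.card := by
      rw [Finset.card_product, Finset.card_univ, Fintype.card_eq_nat_card, H.index_eq_card]

theorem card_le_card_generators_mul (hτ1 : τ ((1 : G) : G ⧸ H) = 1) :
    S.card ≤ (generators τ hτ S).card * H.index := by
  have hmaps : ∀ s ∈ S, (remainder τ hτ s, (s : G ⧸ H)) ∈ generators τ hτ S ×ˢ Finset.univ :=
    fun s hs => Finset.mem_product.2
      ⟨mem_generators.2 ⟨(1 : G), s, hs, by rw [hτ1, mul_one]⟩, Finset.mem_univ _⟩
  have hinj : Set.InjOn (fun s => (remainder τ hτ s, (s : G ⧸ H))) S := by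
    intro a _ b _ hab
    simp only [Prod.mk.injEq] at hab
    rw [← rep_mul_remainder (hτ := hτ) a, ← rep_mul_remainder (hτ := hτ) b, hab.1, hab.2]
  calc S.card ≤ (generators τ hτ S ×ˢ Finset.univ).card :=
        Finset.card_le_card_of_injOn _ hmaps hinj
    _ = (generators τ hτ S).card * H.index := by
      rw [Finset.card_product, Finset.card_univ, Fintype.card_eq_nat_card, H.index_eq_card]

end Schreier

open Schreier in
/-- **Reidemeister–Schreier generating sets.**
Let `G` be a finite group generated by a symmetric set `S` containing the identity, and
let `G₀ ≤ G` have index `d`.  Then `G₀ ∩ S^{2d-1}` contains a symmetric generating set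
`S₀` for `G₀` with `|S|/d ≤ |S₀| ≤ d|S|` and
`(diam_S(G) − d)/(2d) ≤ diam_{S₀}(G₀) ≤ diam_S(G)`. -/
theorem stmt16 {G : Type*} [Group G] [Fintype G] [DecidableEq G] (S : Finset G)
    (h1 : (1 : G) ∈ S) (hsym : ∀ s ∈ S, s⁻¹ ∈ S)
    (hgen : Subgroup.closure (S : Set G) = ⊤)
    (G₀ : Subgroup G) (d : ℕ) (hd : G₀.index = d) :
    ∃ S₀ : Finset ↥G₀,
      (1 : ↥G₀) ∈ S₀ ∧ (∀ x ∈ S₀, x⁻¹ ∈ S₀) ∧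
      Subgroup.closure (S₀ : Set ↥G₀) = ⊤ ∧
      (∀ x ∈ S₀, (x : G) ∈ S ^ (2 * d - 1)) ∧
      (S.card : ℝ) / (d : ℝ) ≤ (S₀.card : ℝ) ∧
      (S₀.card : ℝ) ≤ (d : ℝ) * (S.card : ℝ) ∧
      ((sdiam (S : Set G) : ℝ) - (d : ℝ)) / (2 * (d : ℝ)) ≤
        (sdiam (S₀ : Set ↥G₀) : ℝ) ∧
      sdiam (S₀ : Set ↥G₀) ≤ sdiam (S : Set G) := by
  classical
  subst hd
  have hd : 0 < G₀.index := Nat.pos_of_ne_zero G₀.index_ne_zero_of_finite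
  obtain ⟨τ, hτS, hτ, hτ1⟩ := G₀.exists_transversal_mem_pow h1 hgen
  set S₀ := generators τ hτ S
  have hpowS : (S : Set G) ^ sdiam (S : Set G) = Set.univ :=
    pow_sdiam ⟨_, pow_card_sub_one_eq_univ h1 hgen⟩
  have hpowS₀ : (S₀ : Set G₀) ^ sdiam (S₀ : Set G₀) = Set.univ :=
    pow_sdiam ⟨_, generators_pow_eq_univ hτ1 hpowS⟩
  have hdiam :
      sdiam (S : Set G) ≤ G₀.index - 1 + (2 * (G₀.index - 1) + 1) * sdiam (S₀ : Set G₀) :=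
    sdiam_le (pow_eq_univ_of_generators_pow_eq_univ hτS hsym hpowS₀)
  refine ⟨S₀, one_mem_generators h1, fun x => inv_mem_generators hsym,
    Subgroup.closure_eq_top_of_pow_eq_univ hpowS₀, fun x hx => ?_, ?_, ?_, ?_,
    sdiam_le (generators_pow_eq_univ hτ1 hpowS)⟩
  · rw [← Finset.mem_coe, Finset.coe_pow,
      show 2 * G₀.index - 1 = 2 * (G₀.index - 1) + 1 by omega]
    exact coe_mem_pow_of_mem_generators hτS hsym hx
  · rw [div_le_iff₀ (by positivity)]
    exact_mod_cast card_le_card_generators_mul hτ1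
  · exact_mod_cast card_generators_le
  · have hmul := Nat.mul_le_mul_right (sdiam (S₀ : Set G₀))
      (show 2 * (G₀.index - 1) + 1 ≤ 2 * G₀.index by omega)
    have hdiam' : (sdiam (S : Set G) : ℝ) ≤ 2 * G₀.index * sdiam (S₀ : Set G₀) + G₀.index := by
      exact_mod_cast (by omega : sdiam (S : Set G) ≤ 2 * G₀.index * sdiam (S₀ : Set G₀) + G₀.index)
    rw [div_le_iff₀ (by positivity)]
    linarith
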